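/- Let W be a finite set, and suppose α' : W → 𝒫(W) is defined by α'(w) := α(ς(w)) where ς : W → W satisfies: ς(w) is sensorily equivalent to w for all w (i.e. P_S^{a_ℕ}(ς(w)) = P_S^{a_ℕ}(w) for all action sequences a_ℕ). Then α' is equivalent to α: for all w and all a_ℕ, the sensor-sequence law computed with update kernels α'_a equals P_S^{a_ℕ}(w). -/

import Mathlib

/-!
Induction on the length of the cylinder. Testing sensory equivalence on one-set cylinders
shows that equivalent states have the same sensor law `β` (the update kernels being
probability measures), so the first step of the cylinder recursion at `w` may be taken with
the kernel of any equivalent state, in particular of `ς w`; the remaining steps are handled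
by the induction hypothesis.
-/

open MeasureTheory
open scoped ENNReal

/-- The σ-algebra on `W` generated by the kernel `β : W → 𝒫(S)`, i.e. by the
evaluation maps `w ↦ β w B` for measurable `B ⊆ S`. -/
def sigmaBeta {W S : Type*} [MeasurableSpace S] (β : W → Measure S) :
    MeasurableSpace W :=
  ⨆ (B : Set S) (_ : MeasurableSet B),
    MeasurableSpace.comap (fun w => β w B) inferInstance

/-- The recursively defined σ-algebras `𝒲_0 = σ(β)`,
`𝒲_n = σ( w ↦ α_a(w)(B) : a ∈ A, B ∈ 𝒲_{n-1} )`. -/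
def WnSeq {W S A : Type*} [MeasurableSpace W] [MeasurableSpace S]
    (β : W → Measure S) (α : A → W → Measure W) : ℕ → MeasurableSpace W
  | 0 => sigmaBeta β
  | n + 1 =>
    ⨆ (a : A) (B : Set W) (_ : MeasurableSet[WnSeq β α n] B),
      MeasurableSpace.comap (fun w => α a w B) inferInstance

/-- `𝒲_sep := σ(⋃ n, 𝒲_n)`. -/
def Wsep {W S A : Type*} [MeasurableSpace W] [MeasurableSpace S]
    (β : W → Measure S) (α : A → W → Measure W) : MeasurableSpace W :=
  ⨆ n, WnSeq β α n


/-- The probability that the sensor sequence, started at world state `w` under the forced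
action sequence `a`, lies in the cylinder `B₁ × ⋯ × Bₙ × S × ⋯` (given as a list).
This encodes the law `P_S^{a_ℕ}(w) ∈ 𝒫(S^ℕ)` via its cylinder probabilities. -/
noncomputable def PS {W S A : Type*} [MeasurableSpace W] [MeasurableSpace S]
    (β : W → Measure S) (α : A → W → Measure W) :
    List (Set S) → W → (ℕ → A) → ℝ≥0∞
  | [], _, _ => 1
  | B :: Bs, w, a =>
    β w B * ∫⁻ w', PS β α Bs w' (fun n => a (n + 1)) ∂(α (a 0) w)

/-- The intrinsic σ-algebra `𝒲_int := σ( P_S^{a_ℕ} : a_ℕ ∈ A^ℕ )`, generated by the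
cylinder evaluations of the sensor-sequence laws. -/
noncomputable def Wint {W S A : Type*} [MeasurableSpace W] [MeasurableSpace S]
    (β : W → Measure S) (α : A → W → Measure W) : MeasurableSpace W :=
  ⨆ (a : ℕ → A) (Bs : List (Set S)) (_ : ∀ B ∈ Bs, MeasurableSet B),
    MeasurableSpace.comap (fun w => PS β α Bs w a) inferInstance

/-- Sensory equivalence: `w ∼ w'` iff `P_S^{a_ℕ}(w) = P_S^{a_ℕ}(w')` for every action
sequence `a_ℕ` (equality of all cylinder probabilities). -/
def sensEquiv {W S A : Type*} [MeasurableSpace W] [MeasurableSpace S]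
    (β : W → Measure S) (α : A → W → Measure W) (w w' : W) : Prop :=
  ∀ (a : ℕ → A) (Bs : List (Set S)), (∀ B ∈ Bs, MeasurableSet B) →
    PS β α Bs w a = PS β α Bs w' a

/-- The atom of the σ-algebra `m` containing `x`. -/
def atomOf {X : Type*} (m : MeasurableSpace X) (x : X) : Set X :=
  ⋂₀ {F : Set X | MeasurableSet[m] F ∧ x ∈ F}


section SensorLaw

variable {W S A : Type*} [MeasurableSpace W] [MeasurableSpace S]
  {β : W → Measure S} {α : A → W → Measure W}

theorem PS_cons (B : Set S) (Bs : List (Set S)) (w : W) (a : ℕ → A) :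
    PS β α (B :: Bs) w a = β w B * ∫⁻ v, PS β α Bs v (fun n => a (n + 1)) ∂α (a 0) w :=
  rfl

theorem PS_singleton (B : Set S) (w : W) (a : ℕ → A) [IsProbabilityMeasure (α (a 0) w)] :
    PS β α [B] w a = β w B := by
  simp only [PS, lintegral_one, measure_univ, mul_one]

theorem sensEquiv.measure_eq [Nonempty A] (hα : ∀ a w, IsProbabilityMeasure (α a w))
    {w w' : W} (h : sensEquiv β α w w') {B : Set S} (hB : MeasurableSet B) :
    β w B = β w' B := by
  let a : ℕ → A := fun _ => Classical.arbitrary A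
  simpa only [PS_singleton] using h a [B] (by simpa using hB)

theorem sensEquiv.PS_cons_eq (hα : ∀ a w, IsProbabilityMeasure (α a w))
    {w' w : W} (h : sensEquiv β α w' w) (a : ℕ → A) {B : Set S} {Bs : List (Set S)}
    (hBs : ∀ C ∈ B :: Bs, MeasurableSet C) :
    β w B * ∫⁻ v, PS β α Bs v (fun n => a (n + 1)) ∂α (a 0) w' = PS β α (B :: Bs) w a := by
  have : Nonempty A := ⟨a 0⟩
  rw [← h.measure_eq hα (hBs B List.mem_cons_self), ← PS_cons]
  exact h a (B :: Bs) hBs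

end SensorLaw

theorem stmt14_general {W S A : Type*} [MeasurableSpace W] [MeasurableSpace S]
    (β : W → Measure S) (α : A → W → Measure W)
    (hαprob : ∀ a w, IsProbabilityMeasure (α a w))
    (ς : W → W)
    (hς : ∀ w : W, sensEquiv β α (ς w) w) :
    ∀ (w : W) (a : ℕ → A) (Bs : List (Set S)), (∀ B ∈ Bs, MeasurableSet B) →
      PS β (fun a w => α a (ς w)) Bs w a = PS β α Bs w a := by
  intro w a Bs hBs
  induction Bs generalizing w a with
  | nil => rfl
  | cons B Bs ih =>
    have hBs' : ∀ C ∈ Bs, MeasurableSet C := fun C hC => hBs C (List.mem_cons_of_mem B hC)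
    calc PS β (fun a w => α a (ς w)) (B :: Bs) w a
        = β w B * ∫⁻ v, PS β α Bs v (fun n => a (n + 1)) ∂α (a 0) (ς w) := by
          rw [PS_cons]
          congr 1
          exact lintegral_congr fun v => ih v _ hBs'
      _ = PS β α (B :: Bs) w a := (hς w).PS_cons_eq hαprob a hBs

/-- for a finite world `W`, if `ς : W → W` maps every state to a sensorily
equivalent state, then the modified update kernels `α'_a(w) := α_a(ς(w))` are equivalent
to `α`: all sensor-sequence laws are unchanged. -/
theorem stmt14 {W S A : Type*} [Finite W] [MeasurableSpace W] [MeasurableSpace S]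
    (β : W → Measure S) (α : A → W → Measure W)
    (hβprob : ∀ w, IsProbabilityMeasure (β w))
    (hαprob : ∀ a w, IsProbabilityMeasure (α a w))
    (ς : W → W)
    (hς : ∀ w : W, sensEquiv β α (ς w) w) :
    ∀ (w : W) (a : ℕ → A) (Bs : List (Set S)), (∀ B ∈ Bs, MeasurableSet B) →
      PS β (fun a w => α a (ς w)) Bs w a = PS β α Bs w a :=
  stmt14_general β α hαprob ς hς
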